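/- arXiv:math/0608005 — 4 statements merged into one kernel-verified Lean document; each statement's English description precedes it below -/
import Mathlib

section
/- For k = m, the generating function of admissible sequences (sequences over {1,...,m} with no m consecutive strictly decreasing entries) satisfies F_{m,m}(t_1,...,t_m) = 1/(1 − (t_1 + ... + t_m) + t_1 t_2 ··· t_m), i.e., F_{m,m} · (1 − (t_1+...+t_m) + t_1···t_m) = 1 as formal power series. -/
/-- `l` has a strictly decreasing run of length `k` starting at position `i`. -/
def HasStrictDecRunAt (k : ℕ) (l : List ℕ) (i : ℕ) : Prop :=
  i + k ≤ l.length ∧ ∀ j, j + 1 < k → l.getD (i + j + 1) 0 < l.getD (i + j) 0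

/-- A sequence is `k`-admissible if no `k` consecutive entries are strictly decreasing. -/
def Admissible (k : ℕ) (l : List ℕ) : Prop := ∀ i, ¬ HasStrictDecRunAt k l i

/-- The generating function `∑ t_{i_1} ⋯ t_{i_ℓ}` over admissible sequences over `{1,…,m}`. -/
noncomputable def admGenFun (m k : ℕ) : MvPowerSeries (Fin m) ℤ := fun d =>
  (Nat.card {l : List ℕ // (∀ x ∈ l, 1 ≤ x ∧ x ≤ m) ∧ Admissible k l ∧
    ∀ i : Fin m, l.count (i.1 + 1) = d i} : ℤ)

/-!
Deleting the last letter is a bijection between nonempty words with letter counts `d` whose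
prefix (all but the last letter) is admissible and pairs `(i, u)` with `u` admissible of counts
`d - eᵢ`. Such a word is either admissible, or its forbidden run is the suffix `m, m-1, …, 1`: a
strictly decreasing run of length `m` over `{1,…,m}` has no other choice. Conversely, for `u`
admissible, `u ++ [m, …, 1]` has an admissible prefix, because a forbidden run must end in the
letter `1`. Hence `F · (t₁ + ⋯ + tₘ) = (F - 1) + F · t₁ ⋯ tₘ`.
-/

theorem apply_add_sub_le_of_forall_succ_lt {k : ℕ} {f : ℕ → ℕ}
    (hf : ∀ j, j + 1 < k → f (j + 1) < f j) {a b : ℕ} (hab : a ≤ b) (hb : b < k) :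
    f b + (b - a) ≤ f a := by
  induction b, hab using Nat.le_induction with
  | base => simp
  | succ b hab ih =>
    have := hf b hb
    have := ih (by omega)
    omega

namespace HasStrictDecRunAt

theorem append_iff_of_add_le_length {k i : ℕ} {u v : List ℕ} (h : i + k ≤ u.length) :
    HasStrictDecRunAt k (u ++ v) i ↔ HasStrictDecRunAt k u i := by
  have hget : ∀ p < i + k, (u ++ v).getD p 0 = u.getD p 0 :=
    fun p hp => List.getD_append _ _ _ _ (by omega)
  simp only [HasStrictDecRunAt, List.length_append]
  refine and_congr (by omega) (forall₂_congr fun j hj => ?_)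
  rw [hget _ (by omega), hget _ (by omega)]

theorem getD_eq {m i j : ℕ} {w : List ℕ} (hw : ∀ x ∈ w, 1 ≤ x ∧ x ≤ m)
    (h : HasStrictDecRunAt m w i) (hj : j < m) : w.getD (i + j) 0 = m - j := by
  set f : ℕ → ℕ := fun j => w.getD (i + j) 0
  have hf : ∀ j, j + 1 < m → f (j + 1) < f j := fun j hj => h.2 j hj
  have hbounds : ∀ j < m, 1 ≤ f j ∧ f j ≤ m := fun j hj => by
    simp only [f, List.getD_eq_getElem _ _ (show i + j < w.length by have := h.1; omega)]
    exact hw _ (List.getElem_mem _)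
  have h₁ := apply_add_sub_le_of_forall_succ_lt hf (Nat.zero_le j) hj
  have h₂ := apply_add_sub_le_of_forall_succ_lt hf (show j ≤ m - 1 by omega) (by omega)
  have := hbounds 0 (by omega)
  have := hbounds (m - 1) (by omega)
  simp only [f] at *
  omega

end HasStrictDecRunAt

theorem Admissible.of_prefix {k : ℕ} {u w : List ℕ} (h : Admissible k w) (huw : u <+: w) :
    Admissible k u := by
  obtain ⟨v, rfl⟩ := huw
  exact fun i hi => h i ((HasStrictDecRunAt.append_iff_of_add_le_length hi.1).2 hi)

theorem admissible_nil {k : ℕ} (hk : 1 ≤ k) : Admissible k [] :=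
  fun i hi => by have := hi.1; simp at this; omega

def descWord (m : ℕ) : List ℕ := (List.range' 1 m).reverse

@[simp] theorem length_descWord (m : ℕ) : (descWord m).length = m := by
  simp [descWord]

theorem getElem_descWord {m j : ℕ} (hj : j < (descWord m).length) : (descWord m)[j] = m - j := by
  simp only [descWord, List.getElem_reverse, List.length_range', List.getElem_range'_1]
  simp at hj
  omega

theorem mem_descWord {m x : ℕ} : x ∈ descWord m ↔ 1 ≤ x ∧ x ≤ m := by
  simp only [descWord, List.mem_reverse, List.mem_range'_1]
  omega

theorem not_admissible_append_descWord (m : ℕ) (u : List ℕ) :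
    ¬ Admissible m (u ++ descWord m) := by
  refine fun h => h u.length ⟨by simp, fun j hj => ?_⟩
  have hget : ∀ p < m, (u ++ descWord m).getD (u.length + p) 0 = m - p := fun p hp => by
    rw [List.getD_append_right _ _ _ _ (by omega), List.getD_eq_getElem _ _ (by simp; omega),
      getElem_descWord]
    omega
  have h₁ := hget j (by omega)
  have h₂ := hget (j + 1) hj
  rw [← add_assoc] at h₂
  omega

/-- Every forbidden run in `u ++ [m, …, 2]` ends with the letter `1`, so it lies inside `u`. -/
theorem admissible_append_dropLast_descWord {m : ℕ} {u : List ℕ} (hu : ∀ x ∈ u, 1 ≤ x ∧ x ≤ m)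
    (hadm : Admissible m u) : Admissible m (u ++ (descWord m).dropLast) := by
  intro i hi
  have hlen : i + m ≤ u.length + (m - 1) := by simpa using hi.1
  by_cases hin : i + m ≤ u.length
  · exact hadm i ((HasStrictDecRunAt.append_iff_of_add_le_length hin).1 hi)
  · have hw : ∀ x ∈ u ++ (descWord m).dropLast, 1 ≤ x ∧ x ≤ m := by
      simp only [List.mem_append]
      rintro x (hx | hx)
      exacts [hu x hx, mem_descWord.1 (List.mem_of_mem_dropLast hx)]
    have hlast := hi.getD_eq hw (show m - 1 < m by omega)
    rw [List.getD_append_right _ _ _ _ (by omega), List.getD_eq_getElem _ _ (by simp; omega),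
      List.getElem_dropLast, getElem_descWord] at hlast
    omega

/-- A forbidden run of `w` that is not one of `w.dropLast` is a suffix, hence it is `[m, …, 1]`. -/
theorem eq_take_append_descWord {m : ℕ} {w : List ℕ} (hw : ∀ x ∈ w, 1 ≤ x ∧ x ≤ m)
    (hdrop : Admissible m w.dropLast) (hnadm : ¬ Admissible m w) :
    w = w.take (w.length - m) ++ descWord m := by
  obtain ⟨i, hi⟩ := not_forall_not.1 hnadm
  have hend : i + m = w.length := by
    by_contra hne
    have hin : i + m ≤ w.dropLast.length := by have := hi.1; simp; omega
    refine hdrop i ((HasStrictDecRunAt.append_iff_of_add_le_length (v := [w.getLast ?_]) hin).1 ?_)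
    · rintro rfl; simp_all
    · rwa [List.dropLast_append_getLast]
  have hdrop_eq : w.drop i = descWord m := by
    refine List.ext_getElem (by simp; omega) fun j hj hj' => ?_
    have hj : j < m := by simpa using hj'
    rw [List.getElem_drop, getElem_descWord, ← hi.getD_eq hw hj, List.getD_eq_getElem]
  rw [show w.length - m = i by omega, hdrop_eq.symm, List.take_append_drop]

noncomputable def letterCounts (m : ℕ) (l : List ℕ) : Fin m →₀ ℕ :=
  Finsupp.equivFunOnFinite.symm fun i => l.count (i.1 + 1)

@[simp] theorem letterCounts_apply (m : ℕ) (l : List ℕ) (i : Fin m) :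
    letterCounts m l i = l.count (i.1 + 1) := rfl

theorem letterCounts_append (m : ℕ) (l₁ l₂ : List ℕ) :
    letterCounts m (l₁ ++ l₂) = letterCounts m l₁ + letterCounts m l₂ := by
  ext; simp [List.count_append]

theorem letterCounts_singleton {m : ℕ} (i : Fin m) :
    letterCounts m [i.1 + 1] = Finsupp.single i 1 := by
  ext j
  simp only [letterCounts_apply, List.count_singleton, Finsupp.single_apply, Fin.ext_iff]
  split_ifs <;> simp_all

theorem letterCounts_descWord (m : ℕ) :
    letterCounts m (descWord m) = ∑ i : Fin m, Finsupp.single i 1 := by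
  ext j
  have hnodup : (descWord m).Nodup := by simpa [descWord] using List.nodup_range' (s := 1) (n := m)
  rw [letterCounts_apply, List.count_eq_one_of_mem hnodup (mem_descWord.2 (by omega)),
    Finsupp.finsetSum_apply, Finset.sum_eq_single j (by simp_all)]
  all_goals simp

theorem length_eq_sum_letterCounts {m : ℕ} {l : List ℕ} (hl : ∀ x ∈ l, 1 ≤ x ∧ x ≤ m) :
    l.length = ∑ i, letterCounts m l i := by
  induction l with
  | nil => simp
  | cons a l ih =>
    obtain ⟨ha₁, ha₂⟩ := hl a (by simp)
    have ha : a = (⟨a - 1, by omega⟩ : Fin m).1 + 1 := by simp; omega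
    rw [List.length_cons, ih fun x hx => hl x (by simp [hx]), ← List.singleton_append,
      letterCounts_append, ha, letterCounts_singleton]
    simp [Finset.sum_add_distrib, add_comm]

theorem finite_of_letterCounts_le {m : ℕ} {d : Fin m →₀ ℕ} {P : List ℕ → Prop}
    (hP : ∀ l, P l → (∀ x ∈ l, 1 ≤ x ∧ x ≤ m) ∧ letterCounts m l ≤ d) : Finite {l // P l} := by
  suffices hfin : {l | P l}.Finite from hfin.to_subtype
  refine ((List.finite_length_le (Fin m) (∑ i, d i)).image (List.map fun i => i.1 + 1)).subset ?_
  intro l hl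
  obtain ⟨hl, hle⟩ := hP l hl
  refine ⟨l.pmap (fun x hx => ⟨x - 1, by omega⟩) hl, ?_, ?_⟩
  · simpa [length_eq_sum_letterCounts hl] using Finset.sum_le_sum fun i _ => hle i
  · rw [List.map_pmap, List.pmap_eq_self]
    intro x hx
    have := hl x hx
    simp only
    omega

/-- Letter counts `d - e`, written as `letterCounts + e = d` to avoid truncated subtraction. -/
def AdmWords (m : ℕ) (e d : Fin m →₀ ℕ) : Type :=
  {l : List ℕ // (∀ x ∈ l, 1 ≤ x ∧ x ≤ m) ∧ Admissible m l ∧ letterCounts m l + e = d}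

def DropLastAdmWords (m : ℕ) (d : Fin m →₀ ℕ) : Type :=
  {w : List ℕ // (∀ x ∈ w, 1 ≤ x ∧ x ≤ m) ∧ w ≠ [] ∧ Admissible m w.dropLast ∧
    letterCounts m w = d}

namespace AdmWords

variable {m : ℕ} {e d : Fin m →₀ ℕ}

instance : Finite (AdmWords m e d) :=
  finite_of_letterCounts_le fun _ hl => ⟨hl.1, hl.2.2 ▸ le_self_add⟩

instance : Finite (DropLastAdmWords m d) :=
  finite_of_letterCounts_le fun _ hw => ⟨hw.1, hw.2.2.2.le⟩

theorem card_eq_zero_of_not_le (h : ¬ e ≤ d) : Nat.card (AdmWords m e d) = 0 :=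
  have : IsEmpty (AdmWords m e d) := ⟨fun l => h (l.2.2.2 ▸ le_add_self)⟩
  Nat.card_of_isEmpty

theorem card_zero_zero (hm : 1 ≤ m) : Nat.card (AdmWords m 0 0) = 1 := by
  refine Nat.card_eq_one_iff_exists.2 ⟨⟨[], by simp, admissible_nil hm, by ext; simp⟩, ?_⟩
  rintro ⟨l, hl, -, hcount⟩
  rw [add_zero] at hcount
  refine Subtype.ext (List.eq_nil_of_length_eq_zero ?_)
  simp [length_eq_sum_letterCounts hl, hcount]

theorem card_sigma_single :
    Nat.card (Σ i : Fin m, AdmWords m (Finsupp.single i 1) d) =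
      Nat.card (DropLastAdmWords m d) := by
  refine Nat.card_congr (Equiv.ofBijective (fun p => ⟨p.2.1 ++ [p.1.1 + 1], ?_⟩) ⟨?_, ?_⟩)
  · obtain ⟨i, l, hl, hadm, hcount⟩ := p
    refine ⟨?_, by simp, by simpa using hadm,
      by rw [letterCounts_append, letterCounts_singleton, hcount]⟩
    simp only [List.mem_append, List.mem_singleton]
    rintro x (hx | rfl)
    exacts [hl x hx, ⟨by omega, i.2⟩]
  · rintro ⟨i, l, hl⟩ ⟨i', l', hl'⟩ h
    obtain ⟨rfl, hii'⟩ := List.append_inj' (congrArg Subtype.val h) rfl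
    obtain rfl : i = i' := Fin.ext (by simpa using hii')
    rfl
  · rintro ⟨w, hw, hne, hadm, hcount⟩
    obtain ⟨hlast₁, hlast₂⟩ := hw _ (List.getLast_mem hne)
    set i : Fin m := ⟨w.getLast hne - 1, by omega⟩
    have hsplit : w.dropLast ++ [i.1 + 1] = w := by
      rw [show i.1 + 1 = w.getLast hne by simp [i]; omega, List.dropLast_append_getLast]
    refine ⟨⟨i, w.dropLast, fun x hx => hw x (List.mem_of_mem_dropLast hx), hadm, ?_⟩,
      Subtype.ext hsplit⟩
    rw [← letterCounts_singleton, ← letterCounts_append, hsplit, hcount]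

theorem card_admissible_dropLastAdmWords (hd : d ≠ 0) :
    Nat.card {w : DropLastAdmWords m d // Admissible m w.1} = Nat.card (AdmWords m 0 d) := by
  refine Nat.card_congr ((Equiv.subtypeSubtypeEquivSubtypeInter _ _).trans
    (Equiv.subtypeEquivRight fun w => ?_))
  constructor
  · rintro ⟨⟨hw, -, -, hcount⟩, hadm⟩
    exact ⟨hw, hadm, by rw [add_zero, hcount]⟩
  · rintro ⟨hw, hadm, hcount⟩
    rw [add_zero] at hcount
    refine ⟨⟨hw, ?_, hadm.of_prefix w.dropLast_prefix, hcount⟩, hadm⟩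
    rintro rfl
    exact hd (hcount.symm.trans (by ext; simp))

theorem dropLastAdmWords_append_descWord (hm : 1 ≤ m)
    (u : AdmWords m (∑ i : Fin m, Finsupp.single i 1) d) :
    (∀ x ∈ u.1 ++ descWord m, 1 ≤ x ∧ x ≤ m) ∧ u.1 ++ descWord m ≠ [] ∧
      Admissible m (u.1 ++ descWord m).dropLast ∧ letterCounts m (u.1 ++ descWord m) = d := by
  obtain ⟨u, hu, hadm, hcount⟩ := u
  have hdesc : descWord m ≠ [] := by simp [← List.length_pos_iff]; omega
  refine ⟨?_, by simp [hdesc], ?_, by rw [letterCounts_append, letterCounts_descWord, hcount]⟩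
  · simp only [List.mem_append]
    rintro x (hx | hx)
    exacts [hu x hx, mem_descWord.1 hx]
  · rw [List.dropLast_append_of_ne_nil hdesc]
    exact admissible_append_dropLast_descWord hu hadm

theorem card_not_admissible_dropLastAdmWords (hm : 1 ≤ m) :
    Nat.card {w : DropLastAdmWords m d // ¬ Admissible m w.1} =
      Nat.card (AdmWords m (∑ i : Fin m, Finsupp.single i 1) d) := by
  refine (Nat.card_congr (Equiv.ofBijective (fun u => ⟨⟨u.1 ++ descWord m,
    dropLastAdmWords_append_descWord hm u⟩, not_admissible_append_descWord m u.1⟩) ⟨?_, ?_⟩)).symm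
  · rintro ⟨u, hu⟩ ⟨u', hu'⟩ h
    exact Subtype.ext (List.append_inj' (congrArg (·.1.1) h) rfl).1
  · rintro ⟨⟨w, hw, -, hdrop, hcount⟩, hnadm⟩
    have hsplit := eq_take_append_descWord hw hdrop hnadm
    refine ⟨⟨w.take (w.length - m), fun x hx => hw x (List.mem_of_mem_take hx),
      hdrop.of_prefix ?_, ?_⟩, Subtype.ext (Subtype.ext hsplit.symm)⟩
    · rw [List.dropLast_eq_take]
      exact List.take_prefix_take_left (by omega)
    · rw [← letterCounts_descWord, ← letterCounts_append, ← hsplit, hcount]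

theorem card_add_card_sum_single (hm : 1 ≤ m) (hd : d ≠ 0) :
    Nat.card (AdmWords m 0 d) + Nat.card (AdmWords m (∑ i : Fin m, Finsupp.single i 1) d) =
      ∑ i : Fin m, Nat.card (AdmWords m (Finsupp.single i 1) d) := by
  classical
  rw [← Nat.card_sigma, card_sigma_single, ← card_admissible_dropLastAdmWords hd,
    ← card_not_admissible_dropLastAdmWords hm, ← Nat.card_sum, Nat.card_congr (Equiv.sumCompl _)]

end AdmWords

open MvPowerSeries in
theorem coeff_admGenFun_mul_monomial (m : ℕ) (e d : Fin m →₀ ℕ) :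
    coeff d (admGenFun m m * monomial e 1) = (Nat.card (AdmWords m e d) : ℤ) := by
  rw [coeff_mul_monomial, mul_one]
  split_ifs with h
  · refine congrArg _ (Nat.card_congr (Equiv.subtypeEquivRight fun l => ?_))
    rw [← eq_tsub_iff_add_eq_of_le h, Finsupp.ext_iff]
    rfl
  · rw [AdmWords.card_eq_zero_of_not_le h, Nat.cast_zero]

open MvPowerSeries in
theorem coeff_admGenFun (m : ℕ) (d : Fin m →₀ ℕ) :
    coeff d (admGenFun m m) = (Nat.card (AdmWords m 0 d) : ℤ) := by
  rw [← coeff_admGenFun_mul_monomial, monomial_zero_one, mul_one]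

/-- For `k = m`:  `F_{m,m}(t_1,…,t_m) · (1 - (t_1 + ⋯ + t_m) + t_1 ⋯ t_m) = 1`. -/
theorem admissible_gen_fun_k_eq_m (m : ℕ) (hm : 2 ≤ m) :
    admGenFun m m *
      (1 - (∑ i : Fin m, MvPowerSeries.X i) +
        ∏ i : Fin m, (MvPowerSeries.X i : MvPowerSeries (Fin m) ℤ)) = 1 := by
  classical
  simp only [MvPowerSeries.X_def, MvPowerSeries.prod_monomial, Finset.prod_const_one]
  ext d
  simp only [mul_add, mul_sub, mul_one, Finset.mul_sum, map_add, map_sub, map_sum,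
    MvPowerSeries.coeff_one, coeff_admGenFun, coeff_admGenFun_mul_monomial]
  rcases eq_or_ne d 0 with rfl | hd
  · have hsingle (i : Fin m) : ¬ Finsupp.single i 1 ≤ 0 := by simp
    have hsum : ¬ ∑ i : Fin m, Finsupp.single i 1 ≤ 0 := fun h => by
      simpa [Finsupp.single_apply] using DFunLike.congr_fun (nonpos_iff_eq_zero.1 h) ⟨0, by omega⟩
    simp [AdmWords.card_zero_zero (by omega : 1 ≤ m), AdmWords.card_eq_zero_of_not_le, hsingle,
      hsum]
  · have key := congrArg (Nat.cast : ℕ → ℤ) (AdmWords.card_add_card_sum_single (by omega) hd)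
    push_cast at key
    rw [if_neg hd]
    linarith
end

section
/- The generating function for the number L_{m,m}(ℓ) of sequences of length ℓ over {1,...,m} with no m consecutive strictly decreasing entries satisfies (1 + ∑_{ℓ≥1} L_{m,m}(ℓ) t^ℓ) · (1 − m t + t^m) = 1 as formal power series in t over ℤ. -/
def descList : ℕ → List ℕ
  | 0 => []
  | n+1 => (n+1) :: descList n

@[simp] lemma descList_length (n : ℕ) : (descList n).length = n := by
  induction n with
  | zero => rfl
  | succ n ih => simp [descList, ih]

lemma descList_getD {n j : ℕ} (h : j < n) : (descList n).getD j 0 = n - j := by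
  induction n generalizing j with
  | zero => omega
  | succ n ih =>
    cases j with
    | zero => simp [descList]
    | succ j => simpa [descList, List.getD_cons_succ] using ih (by omega)

lemma descList_mem {n x : ℕ} (h : x ∈ descList n) : 1 ≤ x ∧ x ≤ n := by
  induction n with
  | zero => simp [descList] at h
  | succ n ih =>
    simp [descList] at h
    rcases h with h | h
    · omega
    · have := ih h; omega

lemma run_shift {m x i : ℕ} {l : List ℕ} :
    HasStrictDecRunAt m (x :: l) (i + 1) ↔ HasStrictDecRunAt m l i := by
  unfold HasStrictDecRunAt
  constructor
  · rintro ⟨h1, h2⟩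
    refine ⟨by simp at h1; omega, fun j hj => ?_⟩
    have := h2 j hj
    rwa [show i + 1 + j + 1 = (i + j + 1) + 1 by ring, show i + 1 + j = (i + j) + 1 by ring,
      List.getD_cons_succ, List.getD_cons_succ] at this
  · rintro ⟨h1, h2⟩
    refine ⟨by simp; omega, fun j hj => ?_⟩
    have := h2 j hj
    rwa [show i + 1 + j + 1 = (i + j + 1) + 1 by ring, show i + 1 + j = (i + j) + 1 by ring,
      List.getD_cons_succ, List.getD_cons_succ]

lemma adm_cons {m x : ℕ} {l : List ℕ} :
    Admissible m (x :: l) ↔ ¬ HasStrictDecRunAt m (x :: l) 0 ∧ Admissible m l := by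
  constructor
  · exact fun h => ⟨h 0, fun i hi => h (i + 1) (run_shift.2 hi)⟩
  · rintro ⟨h0, h⟩ i
    cases i with
    | zero => exact h0
    | succ i => rw [run_shift]; exact h i

lemma adm_of_short {m : ℕ} {l : List ℕ} (h : l.length < m) : Admissible m l := by
  rintro i ⟨h1, -⟩; omega

lemma adm_tail {m : ℕ} {l : List ℕ} (h : Admissible m l) : Admissible m l.tail := by
  cases l with
  | nil => simpa using h
  | cons x l => exact fun i hi => h (i + 1) (run_shift.2 hi)

lemma run_forces {m : ℕ} {l : List ℕ} (hP : ∀ x ∈ l, 1 ≤ x ∧ x ≤ m)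
    (h : HasStrictDecRunAt m l 0) : ∀ j < m, l.getD j 0 = m - j := by
  obtain ⟨hlen, hval⟩ := h
  rw [zero_add] at hlen
  have hmem : ∀ j < m, 1 ≤ l.getD j 0 ∧ l.getD j 0 ≤ m := by
    intro j hj
    have hjl : j < l.length := by omega
    rw [List.getD_eq_getElem l 0 hjl]
    exact hP _ (List.getElem_mem hjl)
  have step : ∀ j, j + 1 < m → l.getD (j + 1) 0 < l.getD j 0 := by
    intro j hj
    have := hval j hj
    simpa using this
  have chain : ∀ k j, j + k < m → l.getD (j + k) 0 + k ≤ l.getD j 0 := by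
    intro k
    induction k with
    | zero => intro j _; simp
    | succ k ih =>
      intro j hj
      have h1 := step (j + k) (by omega)
      have h2 := ih j (by omega)
      have : l.getD (j + (k + 1)) 0 = l.getD (j + k + 1) 0 := by ring_nf
      omega
  intro j hj
  have h1 := chain (m - 1 - j) j (by omega)
  have h2 := chain j 0 (by omega)
  rw [zero_add] at h2
  have h3 := hmem (j + (m - 1 - j)) (by omega)
  have h4 := hmem 0 (by omega)
  have h5 := hmem j hj
  omega

lemma run_desc_append (m : ℕ) (p : List ℕ) :
    HasStrictDecRunAt m (descList m ++ p) 0 := by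
  constructor
  · simp
  · intro j hj
    rw [List.getD_append _ _ _ _ (by simp; omega),
      List.getD_append _ _ _ _ (by simp; omega), descList_getD (by omega),
      descList_getD (by omega)]
    omega

lemma adm_desc_append {m : ℕ} (hm : 2 ≤ m) {p : List ℕ} (hP : ∀ x ∈ p, 1 ≤ x ∧ x ≤ m) :
    Admissible m (descList (m - 1) ++ p) ↔ Admissible m p := by
  set d := m - 1 with hd
  constructor
  · intro h i hi
    obtain ⟨h1, h2⟩ := hi
    refine h (i + d) ⟨by simp; omega, fun j hj => ?_⟩
    rw [List.getD_append_right _ _ _ _ (by simp; omega),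
      List.getD_append_right _ _ _ _ (by simp; omega)]
    have e1 : i + d + j + 1 - (descList d).length = i + j + 1 := by simp; omega
    have e2 : i + d + j - (descList d).length = i + j := by simp; omega
    rw [e1, e2]
    exact h2 j hj
  · intro hp i hi
    obtain ⟨h1, h2⟩ := hi
    simp only [List.length_append, descList_length] at h1
    by_cases hcase : d ≤ i
    · refine hp (i - d) ⟨by omega, fun j hj => ?_⟩
      have := h2 j hj
      rw [List.getD_append_right _ _ _ _ (by simp; omega),
        List.getD_append_right _ _ _ _ (by simp; omega)] at this
      have e1 : i + j + 1 - (descList d).length = i - d + j + 1 := by simp; omega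
      have e2 : i + j - (descList d).length = i - d + j := by simp; omega
      rwa [e1, e2] at this
    · -- i < d : the pair (d-1, d) is inside the run, giving p[0] < 1
      push_neg at hcase
      have hplen : 1 ≤ p.length := by omega
      have hkey := h2 (d - 1 - i) (by omega)
      have e1 : i + (d - 1 - i) = d - 1 := by omega
      have e2 : i + (d - 1 - i) + 1 = d := by omega
      rw [e2, e1] at hkey
      rw [List.getD_append_right _ _ _ _ (by simp),
        List.getD_append _ _ _ _ (by simp; omega)] at hkey
      rw [descList_getD (by omega)] at hkey
      have e3 : d - (descList d).length = 0 := by simp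
      rw [e3] at hkey
      have : 1 ≤ p.getD 0 0 := by
        rw [List.getD_eq_getElem p 0 (by omega)]
        exact (hP _ (List.getElem_mem (by omega))).1
      omega

lemma bad_eq {m : ℕ} (hm : 1 ≤ m) {t : List ℕ} (hP : ∀ x ∈ t, 1 ≤ x ∧ x ≤ m)
    (htail : Admissible m t.tail) (hbad : ¬ Admissible m t) :
    t = descList m ++ t.drop m := by
  have hrun0 : HasStrictDecRunAt m t 0 := by
    cases t with
    | nil => exact absurd (adm_of_short (by simp; omega)) hbad
    | cons x l =>
      by_contra h0
      exact hbad (adm_cons.2 ⟨h0, by simpa using htail⟩)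
  have hlen : m ≤ t.length := by have := hrun0.1; omega
  have hval := run_forces hP hrun0
  have htake : t.take m = descList m := by
    apply List.ext_getElem (by simp; omega)
    intro n h1 h2
    rw [List.getElem_take]
    have hn : n < m := by simpa using h2
    have := hval n hn
    rw [List.getD_eq_getElem t 0 (by omega)] at this
    rw [this, ← List.getD_eq_getElem (descList m) 0 h2, descList_getD hn]
  conv_lhs => rw [← List.take_append_drop m t, htake]

lemma finite_len (m n : ℕ) : {l : List ℕ | (∀ x ∈ l, x ≤ m) ∧ l.length = n}.Finite := by
  induction n with
  | zero =>
    apply Set.Finite.subset (Set.finite_singleton ([] : List ℕ))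
    rintro l ⟨-, h⟩
    simp [List.length_eq_zero_iff.mp h]
  | succ n ih =>
    apply Set.Finite.subset
      (((Set.finite_Icc 0 m).prod ih).image fun p : ℕ × List ℕ => p.1 :: p.2)
    rintro l ⟨h1, h2⟩
    cases l with
    | nil => simp at h2
    | cons x l' =>
      exact ⟨(x, l'), ⟨⟨Nat.zero_le x, h1 x (by simp)⟩,
        ⟨fun y hy => h1 y (by simp [hy]), by simpa using h2⟩⟩, rfl⟩

lemma finite_sub (m n : ℕ) (Q : List ℕ → Prop) :
    Finite {l : List ℕ // (∀ x ∈ l, 1 ≤ x ∧ x ≤ m) ∧ Q l ∧ l.length = n} := by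
  have h : {l : List ℕ | (∀ x ∈ l, 1 ≤ x ∧ x ≤ m) ∧ Q l ∧ l.length = n}.Finite :=
    (finite_len m n).subset (fun l hl => ⟨fun x hx => (hl.1 x hx).2, hl.2.2⟩)
  exact h.to_subtype

lemma descList_tail_append (m : ℕ) (hm : 1 ≤ m) (p : List ℕ) :
    (descList m ++ p).tail = descList (m - 1) ++ p := by
  obtain ⟨d, rfl⟩ : ∃ d, m = d + 1 := ⟨m - 1, by omega⟩
  simp [descList]

/-- `L m k ℓ` is the number of admissible sequences of length `ℓ` over `{1,…,m}`. -/
noncomputable def L (m k ℓ : ℕ) : ℕ :=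
  Nat.card {l : List ℕ // (∀ x ∈ l, 1 ≤ x ∧ x ≤ m) ∧ Admissible k l ∧ l.length = ℓ}

lemma L_zero (m : ℕ) (hm : 1 ≤ m) : L m m 0 = 1 := by
  haveI : Unique {l : List ℕ // (∀ x ∈ l, 1 ≤ x ∧ x ≤ m) ∧ Admissible m l ∧ l.length = 0} :=
    ⟨⟨⟨[], by simp, adm_of_short (by simp; omega), rfl⟩⟩,
      fun ⟨l, hl⟩ => Subtype.ext (List.length_eq_zero_iff.mp hl.2.2)⟩
  exact Nat.card_unique

def consF (m n : ℕ) :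
    ↥(Set.Icc 1 m) × {l : List ℕ // (∀ x ∈ l, 1 ≤ x ∧ x ≤ m) ∧ Admissible m l ∧ l.length = n} →
    {l : List ℕ // (∀ x ∈ l, 1 ≤ x ∧ x ≤ m) ∧ Admissible m l.tail ∧ l.length = n + 1} :=
  fun p => ⟨p.1.1 :: p.2.1, by
    intro x hx
    rcases List.mem_cons.mp hx with rfl | hx
    · exact Set.mem_Icc.mp p.1.2
    · exact p.2.2.1 x hx, by simpa using p.2.2.2.1, by simp [p.2.2.2.2]⟩

lemma consF_bij (m n : ℕ) : Function.Bijective (consF m n) := by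
  constructor
  · rintro ⟨⟨x, hx⟩, ⟨l, hl⟩⟩ ⟨⟨y, hy⟩, ⟨l', hl'⟩⟩ h
    have hv : x :: l = y :: l' := congrArg Subtype.val h
    simp only [List.cons.injEq] at hv
    simp only [Prod.mk.injEq, Subtype.mk.injEq]
    exact hv
  · rintro ⟨l, hl⟩
    cases l with
    | nil => exact absurd hl.2.2 (by simp)
    | cons x l' =>
      exact ⟨⟨⟨x, Set.mem_Icc.mpr (hl.1 x (by simp))⟩,
        ⟨l', fun y hy => hl.1 y (by simp [hy]), by simpa using hl.2.1,
          by simpa using hl.2.2⟩⟩, Subtype.ext rfl⟩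

def appF (m n : ℕ) (hm : 2 ≤ m) (hmn : m ≤ n) :
    {l : List ℕ // (∀ x ∈ l, 1 ≤ x ∧ x ≤ m) ∧ Admissible m l ∧ l.length = n - m} →
    {l : List ℕ // (∀ x ∈ l, 1 ≤ x ∧ x ≤ m) ∧
      (Admissible m l.tail ∧ ¬ Admissible m l) ∧ l.length = n} :=
  fun p => ⟨descList m ++ p.1, by
    intro x hx
    rcases List.mem_append.mp hx with hx | hx
    · exact descList_mem hx
    · exact p.2.1 x hx, ⟨by
      rw [descList_tail_append m (by omega)]
      exact (adm_desc_append hm p.2.1).mpr p.2.2.1,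
      fun h => h 0 (run_desc_append m p.1)⟩, by simp [p.2.2.2]; omega⟩

lemma appF_bij (m n : ℕ) (hm : 2 ≤ m) (hmn : m ≤ n) :
    Function.Bijective (appF m n hm hmn) := by
  constructor
  · rintro ⟨l, hl⟩ ⟨l', hl'⟩ h
    have hv : descList m ++ l = descList m ++ l' := congrArg Subtype.val h
    exact Subtype.ext (List.append_cancel_left hv)
  · rintro ⟨l, hl⟩
    obtain ⟨hP, ⟨htail, hbad⟩, hlen⟩ := hl
    have heq := bad_eq (by omega) hP htail hbad
    refine ⟨⟨l.drop m, fun x hx => hP x (List.mem_of_mem_drop hx), ?_, by simp [hlen]⟩,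
      Subtype.ext heq.symm⟩
    have h2 : Admissible m (descList (m - 1) ++ l.drop m) := by
      rw [← descList_tail_append m (by omega), ← heq]
      exact htail
    exact (adm_desc_append hm (fun x hx => hP x (List.mem_of_mem_drop hx))).mp h2

lemma card_rec (m : ℕ) (hm : 2 ≤ m) (n : ℕ) :
    m * L m m n = L m m (n + 1) + if m ≤ n + 1 then L m m (n + 1 - m) else 0 := by
  classical
  haveI hfin : ∀ (k : ℕ) (Q : List ℕ → Prop),
      Finite {l : List ℕ // (∀ x ∈ l, 1 ≤ x ∧ x ≤ m) ∧ Q l ∧ l.length = k} :=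
    fun k Q => finite_sub m k Q
  set T : Type :=
    {l : List ℕ // (∀ x ∈ l, 1 ≤ x ∧ x ≤ m) ∧ Admissible m l.tail ∧ l.length = n + 1} with hT
  set B : Type :=
    {l : List ℕ // (∀ x ∈ l, 1 ≤ x ∧ x ≤ m) ∧
      (Admissible m l.tail ∧ ¬ Admissible m l) ∧ l.length = n + 1} with hB
  haveI : Finite T := hfin _ _
  haveI : Finite B := hfin _ _
  have step1 : Nat.card T = m * L m m n := by
    have h1 : Nat.card T = Nat.card (↥(Set.Icc 1 m) ×
        {l : List ℕ // (∀ x ∈ l, 1 ≤ x ∧ x ≤ m) ∧ Admissible m l ∧ l.length = n}) :=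
      (Nat.card_congr (Equiv.ofBijective _ (consF_bij m n))).symm
    rw [h1, Nat.card_prod]
    congr 1
    simp [Nat.card_eq_fintype_card]
  have step2 : Nat.card T = L m m (n + 1) + Nat.card B := by
    haveI : Finite {t : T // Admissible m t.1} := Subtype.finite
    haveI : Finite {t : T // ¬ Admissible m t.1} := Subtype.finite
    have e1 : {t : T // Admissible m t.1} ≃
        {l : List ℕ // (∀ x ∈ l, 1 ≤ x ∧ x ≤ m) ∧ Admissible m l ∧ l.length = n + 1} :=
      { toFun := fun t => ⟨t.1.1, t.1.2.1, t.2, t.1.2.2.2⟩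
        invFun := fun l => ⟨⟨l.1, l.2.1, adm_tail l.2.2.1, l.2.2.2⟩, l.2.2.1⟩
        left_inv := fun t => rfl
        right_inv := fun l => rfl }
    have e2 : {t : T // ¬ Admissible m t.1} ≃ B :=
      { toFun := fun t => ⟨t.1.1, t.1.2.1, ⟨t.1.2.2.1, t.2⟩, t.1.2.2.2⟩
        invFun := fun l => ⟨⟨l.1, l.2.1, l.2.2.1.1, l.2.2.2⟩, l.2.2.1.2⟩
        left_inv := fun t => rfl
        right_inv := fun l => rfl }
    rw [Nat.card_congr (Equiv.sumCompl fun t : T => Admissible m t.1).symm,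
      Nat.card_sum, Nat.card_congr e1, Nat.card_congr e2]
    rfl
  have step3 : Nat.card B = if m ≤ n + 1 then L m m (n + 1 - m) else 0 := by
    by_cases hmn : m ≤ n + 1
    · rw [if_pos hmn]
      exact (Nat.card_congr (Equiv.ofBijective _ (appF_bij m (n + 1) hm hmn))).symm
    · rw [if_neg hmn]
      haveI : IsEmpty B := ⟨fun l => l.2.2.1.2 (adm_of_short (by rw [l.2.2.2]; omega))⟩
      exact Nat.card_of_isEmpty
  rw [← step1, step2, step3]

/-- `(1 + ∑_{ℓ ≥ 1} L_{m,m}(ℓ) t^ℓ) · (1 - m t + t^m) = 1` as formal power series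
over `ℤ` (note `L_{m,m}(0) = 1`). -/
theorem admissible_count_gen_fun_k_eq_m (m : ℕ) (hm : 2 ≤ m) :
    (PowerSeries.mk fun ℓ => (L m m ℓ : ℤ)) *
      (1 - (m : ℤ) • (PowerSeries.X : PowerSeries ℤ) + PowerSeries.X ^ m) = 1 := by
  have hrec := card_rec m hm
  apply PowerSeries.ext
  intro n
  have hX : (PowerSeries.mk fun ℓ => (L m m ℓ : ℤ)) * PowerSeries.X =
      (PowerSeries.mk fun ℓ => (L m m ℓ : ℤ)) * PowerSeries.X ^ 1 := by rw [pow_one]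
  rw [mul_add, mul_sub, mul_one, map_add, map_sub, mul_smul_comm, map_smul, hX,
    PowerSeries.coeff_mul_X_pow', PowerSeries.coeff_mul_X_pow', PowerSeries.coeff_one]
  cases n with
  | zero =>
    simp [PowerSeries.coeff_mk, L_zero m (by omega), show ¬ m ≤ 0 by omega]
  | succ k =>
    have h := hrec k
    simp only [PowerSeries.coeff_mk, smul_eq_mul, if_pos (Nat.succ_le_succ (Nat.zero_le k)),
      if_neg (Nat.succ_ne_zero k), Nat.add_sub_cancel]
    by_cases hmk : m ≤ k + 1
    · rw [if_pos hmk] at h ⊢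
      have h' : (m : ℤ) * L m m k = L m m (k + 1) + L m m (k + 1 - m) := by exact_mod_cast h
      linear_combination -h'
    · rw [if_neg hmk] at h ⊢
      have h' : (m : ℤ) * L m m k = L m m (k + 1) := by exact_mod_cast h
      linear_combination -h'
end

section
/- Let m ≥ 2 and let L(ℓ) = L_{m,m}(ℓ) be the number of sequences of length ℓ over {1,...,m} with no m consecutive strictly decreasing entries. Then L satisfies the linear recurrence L(ℓ) = m·L(ℓ−1) − L(ℓ−m) for all ℓ ≥ m, with initial conditions L(ℓ) = m^ℓ for 0 ≤ ℓ < m. -/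
/-! A word whose tail is admissible is either admissible or starts with a strictly decreasing
run of length `m`; with letters in `{1, …, m}` that run can only be `m, m - 1, …, 1`, and removing
it leaves an admissible word of length `ℓ - m`. Conversely, prefixing `m, …, 1` to an admissible
word creates no other run, because its final `1` cannot be followed by a smaller letter. Choosing
the first letter freely, there are `m · L(ℓ - 1)` words of length `ℓ` with admissible tail, so
`m · L(ℓ - 1) = L(ℓ) + L(ℓ - m)`. -/

theorem eq_sub_of_strictAnti_of_bounded {m : ℕ} {f : ℕ → ℕ}
    (hf : ∀ j, j + 1 < m → f (j + 1) < f j) (hb : ∀ j < m, 1 ≤ f j ∧ f j ≤ m) {j : ℕ}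
    (hj : j < m) : f j = m - j := by
  have gap : ∀ a b, a ≤ b → b < m → f b + (b - a) ≤ f a := by
    intro a b hab
    induction b, hab using Nat.le_induction with
    | base => simp
    | succ b _ ih => intro hb; have := hf b hb; have := ih (by omega); omega
  have := gap 0 j; have := gap j (m - 1); have := hb 0; have := hb (m - 1)
  omega

variable {k m n i ℓ : ℕ} {l p : List ℕ}

theorem hasStrictDecRunAt_drop (hn : n ≤ l.length) :
    HasStrictDecRunAt k (l.drop n) i ↔ HasStrictDecRunAt k l (n + i) := by
  simp only [HasStrictDecRunAt, List.length_drop, List.getD_eq_getElem?_getD,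
    List.getElem?_drop, Nat.add_assoc]
  constructor <;> rintro ⟨h, h'⟩ <;> exact ⟨by omega, h'⟩

theorem Admissible.drop (h : Admissible k l) (hn : n ≤ l.length) : Admissible k (l.drop n) :=
  fun i hi => h (n + i) ((hasStrictDecRunAt_drop hn).1 hi)

theorem Admissible.tail (h : Admissible k l) : Admissible k l.tail := by
  cases l with
  | nil => exact h
  | cons a p => exact h.drop (n := 1) (by simp)

theorem admissible_of_length_lt (h : l.length < k) : Admissible k l :=
  fun i hi => by have := hi.1; omega

theorem hasStrictDecRunAt_zero_of_admissible_tail (ht : Admissible k l.tail)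
    (h : ¬ Admissible k l) : HasStrictDecRunAt k l 0 := by
  obtain ⟨i, hi⟩ := not_forall_not.1 h
  cases i with
  | zero => exact hi
  | succ i =>
    have hl : 1 ≤ l.length := by have := hi.1; omega
    refine absurd ?_ (ht i)
    rw [← List.drop_one, hasStrictDecRunAt_drop hl, Nat.add_comm]
    exact hi

theorem HasStrictDecRunAt.getD_eq_sub (h : HasStrictDecRunAt m l i)
    (hl : ∀ x ∈ l, 1 ≤ x ∧ x ≤ m) {j : ℕ} (hj : j < m) : l.getD (i + j) 0 = m - j := by
  refine eq_sub_of_strictAnti_of_bounded (f := fun j => l.getD (i + j) 0) h.2 (fun j hj => ?_) hj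
  have hij : i + j < l.length := by have := h.1; omega
  simpa only [List.getD_eq_getElem _ _ hij] using hl _ (List.getElem_mem hij)

def countdown (m : ℕ) : List ℕ := (List.range m).map (m - ·)

@[simp]
theorem length_countdown (m : ℕ) : (countdown m).length = m := by simp [countdown]

@[simp]
theorem mem_countdown {x : ℕ} : x ∈ countdown m ↔ 1 ≤ x ∧ x ≤ m := by
  simp only [countdown, List.mem_map, List.mem_range]
  exact ⟨by rintro ⟨a, ha, rfl⟩; omega, fun hx => ⟨m - x, by omega, by omega⟩⟩

theorem getD_countdown {j : ℕ} (hj : j < m) : (countdown m).getD j 0 = m - j := by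
  simp [countdown, List.getD_eq_getElem?_getD, hj]

theorem take_eq_countdown (h : HasStrictDecRunAt m l 0) (hl : ∀ x ∈ l, 1 ≤ x ∧ x ≤ m) :
    l.take m = countdown m := by
  have hm : m ≤ l.length := by simpa using h.1
  refine List.ext_getElem (by simpa using hm) fun j h₁ h₂ => ?_
  have hj : j < m := by simpa using h₂
  rw [List.getElem_take, ← List.getD_eq_getElem _ 0, ← List.getD_eq_getElem _ 0,
    getD_countdown hj, ← h.getD_eq_sub hl hj, Nat.zero_add]

theorem hasStrictDecRunAt_countdown_append : HasStrictDecRunAt m (countdown m ++ p) 0 := by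
  refine ⟨by simp, fun j hj => ?_⟩
  rw [Nat.zero_add, List.getD_append _ _ _ _ (by rw [length_countdown]; omega),
    List.getD_append _ _ _ _ (by rw [length_countdown]; omega), getD_countdown hj, getD_countdown (by omega)]
  omega

theorem admissible_tail_countdown_append (hm : 0 < m) (hp : ∀ x ∈ p, 1 ≤ x)
    (h : Admissible m p) : Admissible m (countdown m ++ p).tail := by
  intro i hi
  rw [← List.drop_one,
    hasStrictDecRunAt_drop (by rw [List.length_append, length_countdown]; omega)] at hi
  by_cases hmi : m ≤ 1 + i
  · rw [← Nat.add_sub_cancel' hmi, ← hasStrictDecRunAt_drop (by simp),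
      List.drop_left' (length_countdown m)] at hi
    exact h _ hi
  · -- the run would continue from the final `1` of `countdown m` into `p`
    have hp0 : 0 < p.length := by
      have := hi.1
      rw [List.length_append, length_countdown] at this
      omega
    have step := hi.2 (m - 2 - i) (by omega)
    rw [show 1 + i + (m - 2 - i) + 1 = m + 0 by omega,
      show 1 + i + (m - 2 - i) = m - 1 by omega, List.getD_append_right _ _ _ _ (by simp),
      List.getD_append _ _ _ _ (by rw [length_countdown]; omega),
      getD_countdown (by omega), length_countdown, Nat.add_sub_cancel_left,
      List.getD_eq_getElem _ _ hp0] at step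
    have := hp _ (List.getElem_mem hp0)
    omega

theorem eq_countdown_append_drop (hm : 0 < m) (hl : ∀ x ∈ l, 1 ≤ x ∧ x ≤ m)
    (ht : Admissible m l.tail) (h : ¬ Admissible m l) :
    l = countdown m ++ l.drop m ∧ Admissible m (l.drop m) := by
  have hrun := hasStrictDecRunAt_zero_of_admissible_tail ht h
  have hlen : m ≤ l.length := by simpa using hrun.1
  refine ⟨by rw [← take_eq_countdown hrun hl, List.take_append_drop], ?_⟩
  rw [show l.drop m = l.tail.drop (m - 1) by rw [List.drop_tail, Nat.sub_add_cancel hm]]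
  exact ht.drop (by rw [List.length_tail]; omega)

def Words (m : ℕ) (P : List ℕ → Prop) (ℓ : ℕ) : Type :=
  {l : List ℕ // (∀ x ∈ l, 1 ≤ x ∧ x ≤ m) ∧ P l ∧ l.length = ℓ}

namespace Words

variable {P Q : List ℕ → Prop}

def consEquiv (m : ℕ) (P : List ℕ → Prop) (ℓ : ℕ) :
    Words m (fun l => P l.tail) (ℓ + 1) ≃ Set.Icc 1 m × Words m P ℓ where
  toFun w :=
    have hw : w.1 ≠ [] := List.ne_nil_of_length_eq_add_one w.2.2.2
    (⟨w.1.head hw, w.2.1 _ (List.head_mem hw)⟩,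
      ⟨w.1.tail, fun x hx => w.2.1 x (List.mem_of_mem_tail hx), w.2.2.1, by simp [w.2.2.2]⟩)
  invFun aw := ⟨aw.1.1 :: aw.2.1, by simpa using ⟨aw.1.2, aw.2.2.1⟩, aw.2.2.2.1,
    by simp [aw.2.2.2.2]⟩
  left_inv w := Subtype.ext (List.cons_head_tail _)
  right_inv aw := rfl

instance : Unique (Words m (fun _ => True) 0) where
  default := ⟨[], by simp⟩
  uniq w := Subtype.ext (List.eq_nil_of_length_eq_zero w.2.2.2)

theorem card_true (m ℓ : ℕ) : Nat.card (Words m (fun _ => True) ℓ) = m ^ ℓ := by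
  induction ℓ with
  | zero => simp
  | succ ℓ ih =>
    rw [Nat.card_congr (consEquiv m (fun _ => True) ℓ), Nat.card_prod, ih]
    simp [pow_succ, mul_comm]

theorem finite_true (m ℓ : ℕ) : Finite (Words m (fun _ => True) ℓ) := by
  induction ℓ with
  | zero => infer_instance
  | succ ℓ ih => exact Finite.of_equiv _ (consEquiv m (fun _ => True) ℓ).symm

instance (m : ℕ) (P : List ℕ → Prop) (ℓ : ℕ) : Finite (Words m P ℓ) :=
  have := finite_true m ℓ
  Finite.of_injective (β := Words m (fun _ => True) ℓ)
    (fun w => ⟨w.1, w.2.1, trivial, w.2.2.2⟩) fun _ _ h => Subtype.ext (congrArg Subtype.val h :)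

def restrictEquiv (R : List ℕ → Prop) :
    {w : Words m P ℓ // R w.1} ≃ Words m (fun l => P l ∧ R l) ℓ :=
  (Equiv.subtypeSubtypeEquivSubtypeInter _ R).trans <| Equiv.subtypeEquivRight fun _ =>
    ⟨fun ⟨⟨h₁, hP, h₂⟩, hR⟩ => ⟨h₁, ⟨hP, hR⟩, h₂⟩,
      fun ⟨h₁, ⟨hP, hR⟩, h₂⟩ => ⟨⟨h₁, hP, h₂⟩, hR⟩⟩

theorem card_congr
    (h : ∀ l : List ℕ, (∀ x ∈ l, 1 ≤ x ∧ x ≤ m) → l.length = ℓ → (P l ↔ Q l)) :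
    Nat.card (Words m P ℓ) = Nat.card (Words m Q ℓ) :=
  Nat.card_congr <| Equiv.subtypeEquivRight fun l =>
    ⟨fun ⟨h₁, hP, h₂⟩ => ⟨h₁, (h l h₁ h₂).1 hP, h₂⟩,
      fun ⟨h₁, hQ, h₂⟩ => ⟨h₁, (h l h₁ h₂).2 hQ, h₂⟩⟩

theorem card_eq_add (m : ℕ) (P Q : List ℕ → Prop) (ℓ : ℕ) :
    Nat.card (Words m P ℓ) = Nat.card (Words m (fun l => P l ∧ Q l) ℓ) +
      Nat.card (Words m (fun l => P l ∧ ¬ Q l) ℓ) := by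
  classical
  rw [← Nat.card_sum]
  exact Nat.card_congr <| (Equiv.sumCompl fun w : Words m P ℓ => Q w.1).symm.trans <|
    Equiv.sumCongr (restrictEquiv Q) (restrictEquiv fun l => ¬ Q l)

end Words

def countdownAppendEquiv (hm : 0 < m) (hℓ : m ≤ ℓ) :
    Words m (fun l => Admissible m l.tail ∧ ¬ Admissible m l) ℓ ≃
      Words m (Admissible m) (ℓ - m) where
  toFun w := ⟨w.1.drop m, fun x hx => w.2.1 x (List.mem_of_mem_drop hx),
    (eq_countdown_append_drop hm w.2.1 w.2.2.1.1 w.2.2.1.2).2, by simp [w.2.2.2]⟩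
  invFun w := ⟨countdown m ++ w.1,
    List.forall_mem_append.2 ⟨fun _ => mem_countdown.1, w.2.1⟩,
    ⟨admissible_tail_countdown_append hm (fun x hx => (w.2.1 x hx).1) w.2.2.1,
      fun h => h 0 hasStrictDecRunAt_countdown_append⟩,
    by rw [List.length_append, length_countdown, w.2.2.2]; omega⟩
  left_inv w := Subtype.ext (eq_countdown_append_drop hm w.2.1 w.2.2.1.1 w.2.2.1.2).1.symm
  right_inv w := Subtype.ext (List.drop_left' (length_countdown m))

theorem L_eq_card (m k ℓ : ℕ) : L m k ℓ = Nat.card (Words m (Admissible k) ℓ) := rfl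

theorem L_eq_pow_of_lt (h : ℓ < k) : L m k ℓ = m ^ ℓ :=
  (Words.card_congr fun _ _ hl =>
    ⟨fun _ => trivial, fun _ => admissible_of_length_lt (hl ▸ h)⟩).trans (Words.card_true m ℓ)

theorem L_succ_add_L_sub (hm : 0 < m) (hn : m ≤ n + 1) :
    L m m (n + 1) + L m m (n + 1 - m) = m * L m m n := by
  calc L m m (n + 1) + L m m (n + 1 - m)
      = Nat.card (Words m (fun l => Admissible m l.tail ∧ Admissible m l) (n + 1)) +
          Nat.card (Words m (fun l => Admissible m l.tail ∧ ¬ Admissible m l) (n + 1)) := by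
        rw [L_eq_card, L_eq_card, Nat.card_congr (countdownAppendEquiv hm hn),
          Words.card_congr fun _ _ _ => ⟨fun h => ⟨h.tail, h⟩, And.right⟩]
    _ = Nat.card (Words m (fun l => Admissible m l.tail) (n + 1)) := (Words.card_eq_add ..).symm
    _ = m * L m m n := by
        rw [Nat.card_congr (Words.consEquiv ..), Nat.card_prod, L_eq_card]
        simp

/-- The recurrence `L(ℓ) = m·L(ℓ-1) - L(ℓ-m)` for `ℓ ≥ m`, with initial conditions
`L(ℓ) = m^ℓ` for `0 ≤ ℓ < m`, where `L(ℓ) = L_{m,m}(ℓ)`. -/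
theorem admissible_count_recurrence (m : ℕ) (hm : 2 ≤ m) :
    (∀ ℓ, ℓ < m → L m m ℓ = m ^ ℓ) ∧
    (∀ ℓ, m ≤ ℓ → (L m m ℓ : ℤ) = m * L m m (ℓ - 1) - L m m (ℓ - m)) := by
  refine ⟨fun ℓ hℓ => L_eq_pow_of_lt hℓ, fun ℓ hℓ => ?_⟩
  obtain ⟨n, rfl⟩ : ∃ n, ℓ = n + 1 := ⟨ℓ - 1, by omega⟩
  have := L_succ_add_L_sub (by omega : 0 < m) hℓ
  rw [Nat.add_sub_cancel]
  omega
end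

section
/- Define F_{m,k}(x_1,...,x_m) = ∑ x_{i_1}···x_{i_ℓ} over all sequences (i_1,...,i_ℓ) ∈ {1,...,m}^ℓ (ℓ ≥ 0) with no k consecutive strictly decreasing entries. Then F_{m,k} is a symmetric formal power series: it is invariant under every permutation of the variables x_1,...,x_m. -/
/-!
A word is `k`-admissible exactly when its descent set contains no `k - 1` consecutive positions
`i, …, i + k - 2` with `i + k` at most its length, so it suffices to show that, for each set `T`,
the number of words with a given multiset of letters and descent set exactly `T` does not change
when the letters are relabelled injectively. By Möbius inversion on the lattice of finite sets it
is enough to show this for descent sets contained in `T`. Such a word is the concatenation of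
weakly increasing blocks cut at the positions of `T`, so relabelling the letters and re-sorting
every block is a bijection between the two sets of words.
-/

open Finset
open scoped List

section MoebiusInversion

variable {β : Type*} [PartialOrder β] [OrderBot β] [LocallyFiniteOrder β] [DecidableEq β]
  [DecidableLE β]

theorem Multiset.card_filter_le_eq_sum_count (A : Multiset β) (x : β) :
    Multiset.card (A.filter (· ≤ x)) = ∑ y ∈ Finset.Iic x, A.count y := by
  rw [← Multiset.sum_count_eq_card (s := Finset.Iic x)
    fun y hy => Finset.mem_Iic.2 (Multiset.of_mem_filter (p := (· ≤ x)) hy)]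
  exact sum_congr rfl fun y hy => Multiset.count_filter_of_pos (Finset.mem_Iic.1 hy)

theorem Multiset.eq_of_forall_card_filter_le_eq {A B : Multiset β}
    (h : ∀ x, Multiset.card (A.filter (· ≤ x)) = Multiset.card (B.filter (· ≤ x))) :
    A = B := by
  refine Multiset.ext' fun x => ?_
  have inversion (C : Multiset β) :=
    IncidenceAlgebra.moebius_inversion_bot (𝕜 := ℤ) (fun y => (C.count y : ℤ))
      (fun x => (Multiset.card (C.filter (· ≤ x)) : ℤ))
      (fun x => by rw [Multiset.card_filter_le_eq_sum_count]; push_cast; rfl) x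
  suffices (A.count x : ℤ) = B.count x by exact_mod_cast this
  rw [inversion A, inversion B]
  simp_rw [h]

end MoebiusInversion

def arrangements {α : Type*} [DecidableEq α] (M : Multiset α) : Finset (List α) :=
  M.lists.toFinset

theorem mem_arrangements {α : Type*} [DecidableEq α] {M : Multiset α} {l : List α} :
    l ∈ arrangements M ↔ (l : Multiset α) = M := by
  simp [arrangements, eq_comm]

def descents (l : List ℕ) : Finset ℕ :=
  {j ∈ range (l.length - 1) | l.getD (j + 1) 0 < l.getD j 0}

theorem mem_descents {l : List ℕ} {j : ℕ} :
    j ∈ descents l ↔ j + 1 < l.length ∧ l.getD (j + 1) 0 < l.getD j 0 := by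
  simp only [descents, mem_filter, mem_range]
  omega

theorem mem_descents_take {l : List ℕ} {n j : ℕ} :
    j ∈ descents (l.take n) ↔ j + 1 < n ∧ j ∈ descents l := by
  simp only [mem_descents, List.length_take, List.getD_eq_getElem?_getD, List.getElem?_take]
  constructor
  · rintro ⟨h1, h2⟩
    refine ⟨by omega, by omega, ?_⟩
    rwa [if_pos (by omega), if_pos (by omega)] at h2
  · rintro ⟨h1, h2, h3⟩
    refine ⟨by omega, ?_⟩
    rwa [if_pos (by omega), if_pos (by omega)]

theorem mem_descents_drop {l : List ℕ} {n j : ℕ} :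
    j ∈ descents (l.drop n) ↔ n + j ∈ descents l := by
  simp only [mem_descents, List.length_drop, List.getD_eq_getElem?_getD, List.getElem?_drop]
  constructor
  · rintro ⟨h1, h2⟩; exact ⟨by omega, by simpa [Nat.add_assoc] using h2⟩
  · rintro ⟨h1, h2⟩; exact ⟨by omega, by simpa [Nat.add_assoc] using h2⟩

theorem descents_eq_empty_iff {l : List ℕ} : descents l = ∅ ↔ l.Pairwise (· ≤ ·) := by
  rw [← List.isChain_iff_pairwise, List.isChain_iff_getElem, eq_empty_iff_forall_notMem]
  refine forall_congr' fun j => ?_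
  rw [mem_descents]
  simp only [not_and, not_lt]
  refine forall_congr' fun hj => ?_
  rw [List.getD_eq_getElem _ _ hj, List.getD_eq_getElem _ _ (Nat.lt_of_succ_lt hj)]

def RunFree (k n : ℕ) (T : Finset ℕ) : Prop :=
  ∀ i, ¬ (i + k ≤ n ∧ ∀ j, j + 1 < k → i + j ∈ T)

theorem admissible_iff_runFree {k : ℕ} {l : List ℕ} :
    Admissible k l ↔ RunFree k l.length (descents l) := by
  refine forall_congr' fun i => not_congr ?_
  simp only [HasStrictDecRunAt, mem_descents]
  constructor
  · rintro ⟨hlen, hrun⟩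
    exact ⟨hlen, fun j hj => ⟨by omega, hrun j hj⟩⟩
  · rintro ⟨hlen, hrun⟩
    exact ⟨hlen, fun j hj => (hrun j hj).2⟩

section BlockSort

variable (g : ℕ → ℕ)

def sortMap (l : List ℕ) : List ℕ := (l.map g).insertionSort (· ≤ ·)

theorem sortMap_perm (l : List ℕ) : sortMap g l ~ l.map g :=
  List.perm_insertionSort _ _

theorem length_sortMap (l : List ℕ) : (sortMap g l).length = l.length :=
  (sortMap_perm g l).length_eq.trans (l.length_map g)

theorem descents_sortMap (l : List ℕ) : descents (sortMap g l) = ∅ :=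
  descents_eq_empty_iff.2 (List.pairwise_insertionSort _ _)

variable {g} in
theorem sortMap_sortMap {g' : ℕ → ℕ} {l : List ℕ} (hl : descents l = ∅)
    (hg : ∀ x ∈ l, g' (g x) = x) : sortMap g' (sortMap g l) = l := by
  refine List.Perm.eq_of_pairwise' (List.pairwise_insertionSort _ _)
    (descents_eq_empty_iff.1 hl) ?_
  calc sortMap g' (sortMap g l) ~ (sortMap g l).map g' := sortMap_perm g' _
    _ ~ (l.map g).map g' := (sortMap_perm g l).map g'
    _ = l := by rw [List.map_map]; exact (List.map_congr_left hg).trans l.map_id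

/-- Cuts the word after each position in `cuts` and applies `sortMap g` to every block; the cuts
after the first are shifted so that they count positions in the rest of the word. -/
def blockSortMap : List ℕ → List ℕ → List ℕ
  | [], l => sortMap g l
  | c :: cs, l =>
    sortMap g (l.take (c + 1)) ++ blockSortMap (cs.map (· - (c + 1))) (l.drop (c + 1))
termination_by cuts => cuts.length

theorem length_blockSortMap (cuts l : List ℕ) : (blockSortMap g cuts l).length = l.length := by
  match cuts with
  | [] => simp [blockSortMap, length_sortMap]
  | c :: cs =>
    rw [blockSortMap, List.length_append, length_sortMap, length_blockSortMap, List.length_take,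
      List.length_drop]
    omega
termination_by cuts.length

theorem blockSortMap_perm (cuts l : List ℕ) : blockSortMap g cuts l ~ l.map g := by
  match cuts with
  | [] => rw [blockSortMap]; exact sortMap_perm g l
  | c :: cs =>
    rw [blockSortMap, ← l.take_append_drop (c + 1), List.map_append, List.take_append_drop]
    exact (sortMap_perm g _).append (blockSortMap_perm _ _)
termination_by cuts.length

theorem take_blockSortMap_cons (c : ℕ) (cs l : List ℕ) :
    (blockSortMap g (c :: cs) l).take (c + 1) = sortMap g (l.take (c + 1)) := by
  rw [blockSortMap, List.take_append,
    List.take_of_length_le (l := sortMap g (l.take (c + 1))) (by simp [length_sortMap])]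
  refine List.append_right_eq_self.2 (List.take_eq_nil_iff.2 ?_)
  rcases le_or_gt (c + 1) l.length with h | h
  · exact .inl (by simp [length_sortMap, h])
  · exact .inr (List.length_eq_zero_iff.1 (by simp [length_blockSortMap]; omega))

theorem drop_blockSortMap_cons (c : ℕ) (cs l : List ℕ) :
    (blockSortMap g (c :: cs) l).drop (c + 1) =
      blockSortMap g (cs.map (· - (c + 1))) (l.drop (c + 1)) := by
  have h := List.take_append_drop (c + 1) (blockSortMap g (c :: cs) l)
  rw [take_blockSortMap_cons] at h
  conv_rhs at h => rw [blockSortMap]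
  exact List.append_cancel_left h

end BlockSort

theorem descents_subset_cons_iff {c : ℕ} {cs l : List ℕ} (hc : ∀ x ∈ cs, c < x) :
    descents l ⊆ (c :: cs).toFinset ↔
      descents (l.take (c + 1)) = ∅ ∧
        descents (l.drop (c + 1)) ⊆ (cs.map (· - (c + 1))).toFinset := by
  simp only [subset_iff, eq_empty_iff_forall_notMem, mem_descents_take, mem_descents_drop,
    List.mem_toFinset, List.mem_cons, List.mem_map]
  constructor
  · intro h
    refine ⟨fun j ⟨hj, hd⟩ => ?_, fun j hd => ?_⟩
    · rcases h hd with rfl | hcs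
      · omega
      · exact absurd (hc j hcs) (by omega)
    · rcases h hd with hjc | hcs
      · omega
      · exact ⟨_, hcs, by omega⟩
  · rintro ⟨htake, hdrop⟩ j hd
    rcases lt_trichotomy j c with hjc | rfl | hjc
    · exact absurd ⟨by omega, hd⟩ (htake j)
    · exact .inl rfl
    · obtain ⟨x, hx, hxj⟩ := hdrop
        (by rwa [show c + 1 + (j - (c + 1)) = j by omega] : c + 1 + (j - (c + 1)) ∈ descents l)
      exact .inr (by rwa [show j = x by have := hc x hx; omega])

theorem pairwise_map_sub_of_pairwise_cons {c : ℕ} {cs : List ℕ}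
    (h : (c :: cs).Pairwise (· < ·)) : (cs.map (· - (c + 1))).Pairwise (· < ·) := by
  rw [List.pairwise_cons] at h
  rw [List.pairwise_map]
  exact h.2.imp_of_mem fun ha hb hab => by have := h.1 _ ha; have := h.1 _ hb; omega

theorem descents_blockSortMap_subset (g : ℕ → ℕ) (cuts l : List ℕ)
    (hcuts : cuts.Pairwise (· < ·)) : descents (blockSortMap g cuts l) ⊆ cuts.toFinset := by
  match cuts with
  | [] => simp [blockSortMap, descents_sortMap]
  | c :: cs =>
    rw [descents_subset_cons_iff (List.pairwise_cons.1 hcuts).1, take_blockSortMap_cons,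
      drop_blockSortMap_cons]
    exact ⟨descents_sortMap g _,
      descents_blockSortMap_subset g _ _ (pairwise_map_sub_of_pairwise_cons hcuts)⟩
termination_by cuts.length

theorem blockSortMap_blockSortMap {g g' : ℕ → ℕ} {cuts l : List ℕ}
    (hcuts : cuts.Pairwise (· < ·)) (hl : descents l ⊆ cuts.toFinset)
    (hg : ∀ x ∈ l, g' (g x) = x) : blockSortMap g' cuts (blockSortMap g cuts l) = l := by
  match cuts with
  | [] =>
    simp only [blockSortMap]
    exact sortMap_sortMap (subset_empty.1 (by simpa using hl)) hg
  | c :: cs =>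
    obtain ⟨htake, hdrop⟩ := (descents_subset_cons_iff (List.pairwise_cons.1 hcuts).1).1 hl
    rw [blockSortMap, take_blockSortMap_cons, drop_blockSortMap_cons,
      sortMap_sortMap htake fun x hx => hg x (List.mem_of_mem_take hx),
      blockSortMap_blockSortMap (pairwise_map_sub_of_pairwise_cons hcuts) hdrop
        fun x hx => hg x (List.mem_of_mem_drop hx),
      List.take_append_drop]
termination_by cuts.length

theorem coe_blockSortMap (g : ℕ → ℕ) (cuts l : List ℕ) :
    (blockSortMap g cuts l : Multiset ℕ) = (l : Multiset ℕ).map g := by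
  rw [Multiset.map_coe, Multiset.coe_eq_coe]
  exact blockSortMap_perm g cuts l

theorem card_filter_descents_subset_arrangements_map {g : ℕ → ℕ} (hg : Function.Injective g)
    (M : Multiset ℕ) (T : Finset ℕ) :
    #{l ∈ arrangements (M.map g) | descents l ⊆ T} =
      #{l ∈ arrangements M | descents l ⊆ T} := by
  obtain ⟨g', hg'⟩ := hg.hasLeftInverse
  have hcuts : T.sort.Pairwise (· < ·) := T.sortedLT_sort.pairwise
  have hT : T.sort.toFinset = T := T.sort_toFinset _
  have mem {N : Multiset ℕ} {l : List ℕ} :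
      l ∈ {l ∈ arrangements N | descents l ⊆ T} ↔
        (l : Multiset ℕ) = N ∧ descents l ⊆ T := by
    rw [mem_filter, mem_arrangements]
  refine card_nbij' (blockSortMap g' T.sort) (blockSortMap g T.sort) ?_ ?_ ?_ ?_
  · intro l hl
    rw [mem_coe, mem] at hl ⊢
    refine ⟨?_, (descents_blockSortMap_subset _ _ _ hcuts).trans hT.le⟩
    rw [coe_blockSortMap, hl.1, Multiset.map_map, hg'.comp_eq_id, Multiset.map_id]
  · intro l hl
    rw [mem_coe, mem] at hl ⊢
    exact ⟨by rw [coe_blockSortMap, hl.1],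
      (descents_blockSortMap_subset _ _ _ hcuts).trans hT.le⟩
  · intro l hl
    rw [mem_coe, mem] at hl
    refine blockSortMap_blockSortMap hcuts (hl.2.trans hT.ge) fun x hx => ?_
    obtain ⟨y, -, rfl⟩ := Multiset.mem_map.1 (hl.1 ▸ Multiset.mem_coe.2 hx)
    rw [hg' y]
  · intro l hl
    rw [mem_coe, mem] at hl
    exact blockSortMap_blockSortMap hcuts (hl.2.trans hT.ge) fun x _ => hg' x

theorem map_descents_arrangements_map {g : ℕ → ℕ} (hg : Function.Injective g)
    (M : Multiset ℕ) :
    (arrangements (M.map g)).val.map descents = (arrangements M).val.map descents := by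
  refine Multiset.eq_of_forall_card_filter_le_eq fun T => ?_
  simpa only [Multiset.filter_map, Multiset.card_map, card_def, filter_val,
    Function.comp_def] using card_filter_descents_subset_arrangements_map hg M T

open Classical in
theorem card_filter_admissible_arrangements (k : ℕ) (M : Multiset ℕ) :
    #{l ∈ arrangements M | Admissible k l} =
      Multiset.card (((arrangements M).val.map descents).filter
        (RunFree k (Multiset.card M))) := by
  rw [Multiset.filter_map, Multiset.card_map, card_def, filter_val]
  congr 1
  refine Multiset.filter_congr fun l hl => ?_
  rw [admissible_iff_runFree, ← mem_arrangements.1 (mem_def.2 hl), Multiset.coe_card]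
  rfl

theorem Fin.val_add_one_injective (m : ℕ) : Function.Injective fun i : Fin m => i.1 + 1 :=
  fun i j h => Fin.ext (by simpa using h)

noncomputable def monomialLetters {m : ℕ} (d : Fin m →₀ ℕ) : Multiset ℕ :=
  (Finsupp.toMultiset d).map fun i => i.1 + 1

theorem coe_eq_monomialLetters_iff {m : ℕ} {d : Fin m →₀ ℕ} {l : List ℕ} :
    (l : Multiset ℕ) = monomialLetters d ↔
      (∀ x ∈ l, 1 ≤ x ∧ x ≤ m) ∧ ∀ i : Fin m, l.count (i.1 + 1) = d i := by
  have count_letters (i : Fin m) : (monomialLetters d).count (i.1 + 1) = d i := by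
    rw [monomialLetters, Multiset.count_map_eq_count' _ _ (Fin.val_add_one_injective m),
      Finsupp.count_toMultiset]
  constructor
  · intro h
    refine ⟨fun x hx => ?_, fun i => by rw [← Multiset.coe_count, h, count_letters]⟩
    obtain ⟨i, -, rfl⟩ := Multiset.mem_map.1 (h ▸ Multiset.mem_coe.2 hx)
    omega
  · rintro ⟨hl, hcount⟩
    refine Multiset.ext' fun x => ?_
    by_cases hx : 1 ≤ x ∧ x ≤ m
    · obtain ⟨i, rfl⟩ : ∃ i : Fin m, i.1 + 1 = x :=
        ⟨⟨x - 1, by omega⟩, by simp only; omega⟩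
      rw [Multiset.coe_count, hcount, count_letters]
    · rw [Multiset.count_eq_zero.2 fun hx' => hx (hl x hx'), Multiset.count_eq_zero.2]
      rintro h
      obtain ⟨i, -, rfl⟩ := Multiset.mem_map.1 h
      omega

open Classical in
theorem admGenFun_apply (m k : ℕ) (d : Fin m →₀ ℕ) :
    admGenFun m k d = #{l ∈ arrangements (monomialLetters d) | Admissible k l} := by
  rw [← Nat.card_eq_finsetCard]
  refine congrArg Nat.cast (Nat.card_congr (Equiv.subtypeEquivRight fun l => ?_))
  rw [mem_filter, mem_arrangements, coe_eq_monomialLetters_iff]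
  tauto

noncomputable def shiftedPerm {m : ℕ} (σ : Equiv.Perm (Fin m)) : Equiv.Perm ℕ :=
  open Classical in σ.extendDomain (Equiv.ofInjective _ (Fin.val_add_one_injective m))

theorem shiftedPerm_apply {m : ℕ} (σ : Equiv.Perm (Fin m)) (i : Fin m) :
    shiftedPerm σ (i.1 + 1) = (σ i).1 + 1 :=
  Equiv.Perm.extendDomain_apply_image σ (Equiv.ofInjective _ (Fin.val_add_one_injective m)) i

theorem monomialLetters_equivMapDomain {m : ℕ} (σ : Equiv.Perm (Fin m)) (d : Fin m →₀ ℕ) :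
    monomialLetters (Finsupp.equivMapDomain σ d) = (monomialLetters d).map (shiftedPerm σ) := by
  rw [monomialLetters, monomialLetters, Finsupp.equivMapDomain_eq_mapDomain,
    ← Finsupp.toMultiset_map, Multiset.map_map, Multiset.map_map]
  exact Multiset.map_congr rfl fun i _ => (shiftedPerm_apply σ i).symm

theorem admissible_gen_fun_symmetric_general (m k : ℕ)
    (σ : Equiv.Perm (Fin m)) (d : Fin m →₀ ℕ) :
    admGenFun m k (Finsupp.equivMapDomain σ d) = admGenFun m k d := by
  rw [admGenFun_apply, admGenFun_apply, monomialLetters_equivMapDomain,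
    card_filter_admissible_arrangements, card_filter_admissible_arrangements,
    map_descents_arrangements_map (shiftedPerm σ).injective, Multiset.card_map]

/-- `F_{m,k}` is a symmetric power series: it is invariant under every permutation of
the variables `x_1,…,x_m` (its coefficients satisfy
`coeff (d ∘ σ) F = coeff d F` for every permutation `σ`). -/
theorem admissible_gen_fun_symmetric (m k : ℕ) (hk : 2 ≤ k) (hkm : k ≤ m)
    (σ : Equiv.Perm (Fin m)) (d : Fin m →₀ ℕ) :
    admGenFun m k (Finsupp.equivMapDomain σ d) = admGenFun m k d :=
  admissible_gen_fun_symmetric_general m k σ d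
end
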